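/- arXiv:1305.0089 — 2 statements merged into one kernel-verified Lean document; each statement's English description precedes it below -/
import Mathlib

section
/- (Remark, superapproximation for quadratics under the mesh condition) Let u(x) = a x² + b x + c with a, b, c ∈ ℝ, let h_i = x_{i+1} − x_i for 0 ≤ i ≤ n−1, and let h = max_{0 ≤ i ≤ n−1} h_i. If |h_i − h_{i−1}| ≤ K h² for all 1 ≤ i ≤ n−1 and some K > 0, then for every interior index 1 ≤ i ≤ n−1 one has |g_i − u'(x_i)| ≤ |a| K h². -/
/-! Away from `[x_{i-1}, x_{i+1}]` the weight `λ_i` vanishes, and on each of the two adjacent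
cells both `λ_i` and `φ_i λ_i` integrate to half the cell length. Hence
`∫ u_h' λ_i = (u(x_{i+1}) - u(x_{i-1})) / 2` and `∫ φ_i λ_i = (x_{i+1} - x_{i-1}) / 2`,
so `g_i` is the central difference quotient of `u`. For `u = a x² + b x + c` this is
`a (x_{i+1} + x_{i-1}) + b`, which differs from `u'(x_i)` by exactly `a (h_i - h_{i-1})`. -/

open intervalIntegral

/-- The standard hat (piecewise linear nodal) basis function `φ_i` associated with the
partition `x 0 < x 1 < ... < x n`.  The branch on `[x_{i-1}, x_i]` is omitted when `i = 0`
and the branch on `[x_i, x_{i+1}]` is omitted when `i = n`. -/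
noncomputable def hatFn (x : ℕ → ℝ) (n i : ℕ) : ℝ → ℝ := fun t =>
  if 0 < i ∧ x (i-1) ≤ t ∧ t ≤ x i then (t - x (i-1)) / (x i - x (i-1))
  else if i < n ∧ x i ≤ t ∧ t ≤ x (i+1) then (x (i+1) - t) / (x (i+1) - x i)
  else 0

/-- The biorthogonal basis function `λ_i`. -/
noncomputable def biorthFn (x : ℕ → ℝ) (n i : ℕ) : ℝ → ℝ := fun t =>
  if 0 < i ∧ x (i-1) ≤ t ∧ t < x i then (2*(t - x (i-1)) + (t - x i)) / (x i - x (i-1))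
  else if i < n ∧ x i ≤ t ∧ t < x (i+1) then (2*(t - x (i+1)) + (t - x i)) / (x i - x (i+1))
  else 0

/-- The piecewise derivative `u_h'` of the interpolant `u_h = Σ_j u(x_j) φ_j`:
on each open subinterval `(x_j, x_{j+1})` it is the constant
`(u(x_{j+1}) - u(x_j)) / (x_{j+1} - x_j)`, and it is (arbitrarily) `0` at grid points and
outside `[x 0, x n]`. -/
noncomputable def interpDeriv (x : ℕ → ℝ) (n : ℕ) (u : ℝ → ℝ) : ℝ → ℝ := fun t =>
  ∑ j ∈ Finset.range n,
    if x j < t ∧ t < x (j+1) then (u (x (j+1)) - u (x j)) / (x (j+1) - x j) else 0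

/-- The recovered gradient value
`g_i = (∫_α^β u_h' λ_i dx) / (∫_α^β φ_i λ_i dx)` with `α = x 0`, `β = x n`. -/
noncomputable def recGrad (x : ℕ → ℝ) (n : ℕ) (u : ℝ → ℝ) (i : ℕ) : ℝ :=
  (∫ t in (x 0)..(x n), interpDeriv x n u t * biorthFn x n i t) /
  (∫ t in (x 0)..(x n), hatFn x n i t * biorthFn x n i t)

open Set MeasureTheory

lemma integral_quadratic (A B C a b : ℝ) :
    ∫ t in a..b, (A * t ^ 2 + B * t + C)
      = A * (b ^ 3 - a ^ 3) / 3 + B * (b ^ 2 - a ^ 2) / 2 + C * (b - a) := by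
  have hint {f : ℝ → ℝ} (hf : Continuous f) : IntervalIntegrable f volume a b :=
    hf.intervalIntegrable a b
  rw [integral_add (hint (by fun_prop)) (hint (by fun_prop)),
    integral_add (hint (by fun_prop)) (hint (by fun_prop)),
    intervalIntegral.integral_const_mul, intervalIntegral.integral_const_mul, integral_pow,
    integral_id, intervalIntegral.integral_const, smul_eq_mul]
  ring

lemma intervalIntegrable_of_eqOn_Ioo {f g : ℝ → ℝ} {a b : ℝ} (hab : a ≤ b)
    (h : EqOn f g (Ioo a b)) (hg : Continuous g) : IntervalIntegrable f volume a b :=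
  (intervalIntegrable_congr_uIoo (uIoo_of_le hab ▸ h)).2 (hg.intervalIntegrable a b)

lemma integral_const_mul_biorth_left (d : ℝ) {p q : ℝ} (hpq : p < q) :
    ∫ t in p..q, d * ((2 * (t - p) + (t - q)) / (q - p)) = d * (q - p) / 2 := by
  have hqp : q - p ≠ 0 := sub_ne_zero.2 hpq.ne'
  have hpoly : (fun t => d * ((2 * (t - p) + (t - q)) / (q - p)))
      = fun t => 0 * t ^ 2 + 3 * d / (q - p) * t + -(d * (2 * p + q)) / (q - p) := by
    funext t; field_simp; ring
  rw [hpoly, integral_quadratic]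
  field_simp; ring

lemma integral_const_mul_biorth_right (d : ℝ) {q r : ℝ} (hqr : q < r) :
    ∫ t in q..r, d * ((2 * (t - r) + (t - q)) / (q - r)) = d * (r - q) / 2 := by
  have hqr' : q - r ≠ 0 := sub_ne_zero.2 hqr.ne
  have hpoly : (fun t => d * ((2 * (t - r) + (t - q)) / (q - r)))
      = fun t => 0 * t ^ 2 + 3 * d / (q - r) * t + -(d * (2 * r + q)) / (q - r) := by
    funext t; field_simp; ring
  rw [hpoly, integral_quadratic]
  field_simp; ring

lemma integral_hat_mul_biorth_left {p q : ℝ} (hpq : p < q) :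
    ∫ t in p..q, (t - p) / (q - p) * ((2 * (t - p) + (t - q)) / (q - p)) = (q - p) / 2 := by
  have hqp : q - p ≠ 0 := sub_ne_zero.2 hpq.ne'
  have hpoly : (fun t => (t - p) / (q - p) * ((2 * (t - p) + (t - q)) / (q - p)))
      = fun t => 3 / (q - p) ^ 2 * t ^ 2 + -(5 * p + q) / (q - p) ^ 2 * t
          + (2 * p ^ 2 + p * q) / (q - p) ^ 2 := by
    funext t; field_simp; ring
  rw [hpoly, integral_quadratic]
  field_simp; ring

lemma integral_hat_mul_biorth_right {q r : ℝ} (hqr : q < r) :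
    ∫ t in q..r, (r - t) / (r - q) * ((2 * (t - r) + (t - q)) / (q - r)) = (r - q) / 2 := by
  have hqr' : q - r ≠ 0 := sub_ne_zero.2 hqr.ne
  have hrq : r - q ≠ 0 := sub_ne_zero.2 hqr.ne'
  have hpoly : (fun t => (r - t) / (r - q) * ((2 * (t - r) + (t - q)) / (q - r)))
      = fun t => 3 / (r - q) ^ 2 * t ^ 2 + -(5 * r + q) / (r - q) ^ 2 * t
          + (2 * r ^ 2 + q * r) / (r - q) ^ 2 := by
    funext t; field_simp; ring
  rw [hpoly, integral_quadratic]
  field_simp; ring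

section Partition

variable {x : ℕ → ℝ} {n i : ℕ} {t : ℝ}

lemma interpDeriv_eq_of_mem_Ioo (hx : StrictMonoOn x (Iic n)) (u : ℝ → ℝ) {k : ℕ}
    (hk : k < n) (ht : t ∈ Ioo (x k) (x (k + 1))) :
    interpDeriv x n u t = (u (x (k + 1)) - u (x k)) / (x (k + 1) - x k) := by
  have hle {j l : ℕ} (hjl : j ≤ l) (hln : l ≤ n) : x j ≤ x l :=
    hx.monotoneOn (hjl.trans hln) hln hjl
  refine (Finset.sum_eq_single k (fun j hj hjk => if_neg ?_) (by simp [hk])).trans (if_pos ht)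
  rintro ⟨hjt, htj⟩
  rcases Nat.lt_or_gt_of_ne hjk with hjk | hkj
  · exact (hle hjk hk.le).not_gt (ht.1.trans htj)
  · exact (hle hkj (Finset.mem_range.1 hj).le).not_gt (hjt.trans ht.2)

lemma biorthFn_eq_left (hi : 0 < i) (ht : t ∈ Ico (x (i - 1)) (x i)) :
    biorthFn x n i t = (2 * (t - x (i - 1)) + (t - x i)) / (x i - x (i - 1)) :=
  if_pos ⟨hi, ht⟩

lemma biorthFn_eq_right (hi : i < n) (ht : t ∈ Ico (x i) (x (i + 1))) :
    biorthFn x n i t = (2 * (t - x (i + 1)) + (t - x i)) / (x i - x (i + 1)) :=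
  (if_neg fun h => h.2.2.not_ge ht.1).trans (if_pos ⟨hi, ht⟩)

lemma biorthFn_eq_zero (hl : x (i - 1) ≤ x i) (hr : x i ≤ x (i + 1))
    (ht : t ∉ Ico (x (i - 1)) (x (i + 1))) : biorthFn x n i t = 0 := by
  simp only [mem_Ico, not_and_or, not_le, not_lt] at ht
  have h₁ : ¬(0 < i ∧ x (i - 1) ≤ t ∧ t < x i) := by
    rintro ⟨-, h₁, h₂⟩
    rcases ht with ht | ht <;> linarith
  have h₂ : ¬(i < n ∧ x i ≤ t ∧ t < x (i + 1)) := by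
    rintro ⟨-, h₁, h₂⟩
    rcases ht with ht | ht <;> linarith
  simp only [biorthFn, if_neg h₁, if_neg h₂]

lemma hatFn_eq_left (hi : 0 < i) (ht : t ∈ Icc (x (i - 1)) (x i)) :
    hatFn x n i t = (t - x (i - 1)) / (x i - x (i - 1)) :=
  if_pos ⟨hi, ht⟩

lemma hatFn_eq_right (hi : i < n) (ht : t ∈ Ioc (x i) (x (i + 1))) :
    hatFn x n i t = (x (i + 1) - t) / (x (i + 1) - x i) :=
  (if_neg fun h => h.2.2.not_gt ht.1).trans (if_pos ⟨hi, ht.1.le, ht.2⟩)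

lemma integral_mul_biorthFn (hx : StrictMonoOn x (Iic n)) (hi : 0 < i) (hin : i < n)
    (g : ℝ → ℝ)
    (hl : IntervalIntegrable (fun t => g t * biorthFn x n i t) volume (x (i - 1)) (x i))
    (hr : IntervalIntegrable (fun t => g t * biorthFn x n i t) volume (x i) (x (i + 1))) :
    ∫ t in x 0..x n, g t * biorthFn x n i t
      = (∫ t in x (i - 1)..x i, g t * biorthFn x n i t)
        + ∫ t in x i..x (i + 1), g t * biorthFn x n i t := by
  have hle {j l : ℕ} (hjl : j ≤ l) (hln : l ≤ n) : x j ≤ x l :=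
    hx.monotoneOn (hjl.trans hln) hln hjl
  have hpq : x (i - 1) ≤ x i := hle (Nat.sub_le i 1) hin.le
  have hqr : x i ≤ x (i + 1) := hle (Nat.le_succ i) hin
  have hsupp : ∫ t in x 0..x n, g t * biorthFn x n i t
      = ∫ t in x (i - 1)..x (i + 1), g t * biorthFn x n i t := by
    have hsub : Ico (x (i - 1)) (x (i + 1)) ⊆ Icc (x 0) (x n) :=
      Ico_subset_Icc_self.trans (Icc_subset_Icc (hle (Nat.zero_le _) (by omega)) (hle hin le_rfl))
    rw [integral_of_le (hle (Nat.zero_le n) le_rfl), integral_of_le (hpq.trans hqr),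
      ← integral_Icc_eq_integral_Ioc,
      setIntegral_eq_of_subset_of_forall_sdiff_eq_zero measurableSet_Icc hsub
        (fun t ht => by rw [biorthFn_eq_zero hpq hqr ht.2, mul_zero]),
      integral_Ico_eq_integral_Ioo, integral_Ioc_eq_integral_Ioo]
  rw [hsupp, integral_add_adjacent_intervals hl hr]

lemma integral_interpDeriv_mul_biorthFn (hx : StrictMonoOn x (Iic n)) (hi : 0 < i) (hin : i < n)
    (u : ℝ → ℝ) :
    ∫ t in x 0..x n, interpDeriv x n u t * biorthFn x n i t
      = (u (x (i + 1)) - u (x (i - 1))) / 2 := by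
  have hpq : x (i - 1) < x i := hx (mem_Iic.2 (by omega)) (mem_Iic.2 (by omega)) (by omega)
  have hqr : x i < x (i + 1) := hx (mem_Iic.2 (by omega)) (mem_Iic.2 (by omega)) (by omega)
  have hl : EqOn (fun t => interpDeriv x n u t * biorthFn x n i t)
      (fun t => (u (x i) - u (x (i - 1))) / (x i - x (i - 1))
        * ((2 * (t - x (i - 1)) + (t - x i)) / (x i - x (i - 1)))) (Ioo (x (i - 1)) (x i)) := by
    intro t ht
    have hi' : i - 1 + 1 = i := Nat.sub_add_cancel hi
    dsimp only
    rw [biorthFn_eq_left hi (Ioo_subset_Ico_self ht),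
      interpDeriv_eq_of_mem_Ioo hx u (by omega : i - 1 < n) (by rwa [hi']), hi']
  have hr : EqOn (fun t => interpDeriv x n u t * biorthFn x n i t)
      (fun t => (u (x (i + 1)) - u (x i)) / (x (i + 1) - x i)
        * ((2 * (t - x (i + 1)) + (t - x i)) / (x i - x (i + 1)))) (Ioo (x i) (x (i + 1))) := by
    intro t ht
    dsimp only
    rw [biorthFn_eq_right hin (Ioo_subset_Ico_self ht), interpDeriv_eq_of_mem_Ioo hx u hin ht]
  rw [integral_mul_biorthFn hx hi hin _ (intervalIntegrable_of_eqOn_Ioo hpq.le hl (by fun_prop))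
      (intervalIntegrable_of_eqOn_Ioo hqr.le hr (by fun_prop)),
    integral_congr_Ioo_of_le hpq.le hl, integral_congr_Ioo_of_le hqr.le hr,
    integral_const_mul_biorth_left _ hpq, integral_const_mul_biorth_right _ hqr]
  field_simp [sub_ne_zero.2 hpq.ne', sub_ne_zero.2 hqr.ne']
  ring

lemma integral_hatFn_mul_biorthFn (hx : StrictMonoOn x (Iic n)) (hi : 0 < i) (hin : i < n) :
    ∫ t in x 0..x n, hatFn x n i t * biorthFn x n i t = (x (i + 1) - x (i - 1)) / 2 := by
  have hpq : x (i - 1) < x i := hx (mem_Iic.2 (by omega)) (mem_Iic.2 (by omega)) (by omega)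
  have hqr : x i < x (i + 1) := hx (mem_Iic.2 (by omega)) (mem_Iic.2 (by omega)) (by omega)
  have hl : EqOn (fun t => hatFn x n i t * biorthFn x n i t)
      (fun t => (t - x (i - 1)) / (x i - x (i - 1))
        * ((2 * (t - x (i - 1)) + (t - x i)) / (x i - x (i - 1)))) (Ioo (x (i - 1)) (x i)) :=
    fun t ht => by
      dsimp only
      rw [hatFn_eq_left hi (Ioo_subset_Icc_self ht), biorthFn_eq_left hi (Ioo_subset_Ico_self ht)]
  have hr : EqOn (fun t => hatFn x n i t * biorthFn x n i t)
      (fun t => (x (i + 1) - t) / (x (i + 1) - x i)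
        * ((2 * (t - x (i + 1)) + (t - x i)) / (x i - x (i + 1)))) (Ioo (x i) (x (i + 1))) :=
    fun t ht => by
      dsimp only
      rw [hatFn_eq_right hin (Ioo_subset_Ioc_self ht),
        biorthFn_eq_right hin (Ioo_subset_Ico_self ht)]
  rw [integral_mul_biorthFn hx hi hin _ (intervalIntegrable_of_eqOn_Ioo hpq.le hl (by fun_prop))
      (intervalIntegrable_of_eqOn_Ioo hqr.le hr (by fun_prop)),
    integral_congr_Ioo_of_le hpq.le hl, integral_congr_Ioo_of_le hqr.le hr,
    integral_hat_mul_biorth_left hpq, integral_hat_mul_biorth_right hqr]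
  ring

theorem recGrad_eq_centralDifference (hx : StrictMonoOn x (Iic n)) (hi : 0 < i) (hin : i < n)
    (u : ℝ → ℝ) :
    recGrad x n u i = (u (x (i + 1)) - u (x (i - 1))) / (x (i + 1) - x (i - 1)) := by
  rw [recGrad, integral_interpDeriv_mul_biorthFn hx hi hin, integral_hatFn_mul_biorthFn hx hi hin,
    div_div_div_cancel_right₀ two_ne_zero]

end Partition

lemma quadratic_centralDifference_sub_deriv (a b c : ℝ) {p q r : ℝ} (hpr : p ≠ r) :
    (a * r ^ 2 + b * r + c - (a * p ^ 2 + b * p + c)) / (r - p) - (2 * a * q + b)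
      = a * ((r - q) - (q - p)) := by
  field_simp [sub_ne_zero.2 hpr.symm]
  ring

theorem recGrad_quadratic_superapprox_general (n : ℕ) (x : ℕ → ℝ)
    (hx : ∀ i < n, x i < x (i+1)) (a b c : ℝ) (K h : ℝ)
    (hmesh : ∀ i : ℕ, 1 ≤ i → i < n →
      |(x (i+1) - x i) - (x i - x (i-1))| ≤ K * h^2) :
    ∀ i : ℕ, 1 ≤ i → i < n →
      |recGrad x n (fun t => a * t^2 + b * t + c) i - (2 * a * x i + b)|
        ≤ |a| * K * h^2 := by
  intro i hi hin
  have hxmono : StrictMonoOn x (Iic n) := strictMonoOn_Iic_of_lt_succ hx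
  have hpr : x (i - 1) ≠ x (i + 1) :=
    (hxmono (mem_Iic.2 (by omega)) (mem_Iic.2 (by omega)) (by omega)).ne
  rw [recGrad_eq_centralDifference hxmono hi hin, quadratic_centralDifference_sub_deriv a b c hpr,
    abs_mul, mul_assoc]
  exact mul_le_mul_of_nonneg_left (hmesh i hi hin) (abs_nonneg a)

/-- superapproximation for quadratics under the mesh condition: for
`u(x) = a x² + b x + c`, with `h_i = x_{i+1} - x_i` and `h = max_i h_i`, if
`|h_i - h_{i-1}| ≤ K h²` for all `1 ≤ i ≤ n-1` and some `K > 0`, then for every interior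
index `1 ≤ i ≤ n-1`, `|g_i - u'(x_i)| ≤ |a| K h²`. -/
theorem recGrad_quadratic_superapprox (n : ℕ) (x : ℕ → ℝ) (hn : 2 ≤ n)
    (hx : ∀ i < n, x i < x (i+1)) (a b c : ℝ) (K h : ℝ) (hK : 0 < K)
    (hub : ∀ i < n, x (i+1) - x i ≤ h)
    (hmem : ∃ i < n, x (i+1) - x i = h)
    (hmesh : ∀ i : ℕ, 1 ≤ i → i < n →
      |(x (i+1) - x i) - (x i - x (i-1))| ≤ K * h^2) :
    ∀ i : ℕ, 1 ≤ i → i < n →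
      |recGrad x n (fun t => a * t^2 + b * t + c) i - (2 * a * x i + b)|
        ≤ |a| * K * h^2 :=
  recGrad_quadratic_superapprox_general n x hx a b c K h hmesh
end

section
/- (Corollary, nodal error for cubics) Let u(x) = a x³ + b x² + c x + d with a, b, c, d ∈ ℝ. Then for every interior index 1 ≤ i ≤ n−1, g_i − u'(x_i) = a (x_{i−1}² + x_{i−1} x_{i+1} + x_{i+1}² − 3 x_i²) + b (x_{i−1} + x_{i+1} − 2 x_i); moreover g_0 − u'(x_0) = a (x_1² + x_0 x_1 − 2 x_0²) + b (x_1 − x_0) and g_n − u'(x_n) = a (x_{n−1}² + x_{n−1} x_n − 2 x_n²) + b (x_{n−1} − x_n). -/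
open intervalIntegral

/-!
On each cell adjacent to `x_i` the biorthogonal function `λ_i` integrates to half the cell
length, and so does `φ_i λ_i`. Since `u_h'` is the constant difference quotient of `u` on each
cell, the numerator of `g_i` is `(u(x_{i+1}) - u(x_{i-1})) / 2` and the denominator
`(x_{i+1} - x_{i-1}) / 2`: the recovered gradient is the difference quotient of `u` over the
support of `λ_i` (one-sided at the end nodes). For a cubic, the difference quotient over `[p, q]`
is `a (p² + p q + q²) + b (p + q) + c`.
-/

open Set

/-! The branches of `φ_i` and `λ_i` on a cell `[p, q]` with node `x_i = q`; the cell to the right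
of `x_i` is the case `p = x_{i+1}`, `q = x_i`, with `p > q`. -/

noncomputable def hatPiece (p q t : ℝ) : ℝ := (t - p) / (q - p)

noncomputable def biorthPiece (p q t : ℝ) : ℝ := (2 * (t - p) + (t - q)) / (q - p)

lemma continuous_hatPiece_mul_biorthPiece (p q : ℝ) :
    Continuous fun t => hatPiece p q t * biorthPiece p q t := by
  unfold hatPiece biorthPiece
  fun_prop

lemma continuous_const_mul_biorthPiece (c p q : ℝ) :
    Continuous fun t => c * biorthPiece p q t := by
  unfold biorthPiece
  fun_prop

lemma integral_biorthPiece (p q : ℝ) : ∫ t in p..q, biorthPiece p q t = (q - p) / 2 := by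
  rcases eq_or_ne p q with rfl | hpq
  · simp
  have : q - p ≠ 0 := sub_ne_zero.mpr hpq.symm
  simp only [biorthPiece, intervalIntegral.integral_div]
  rw [integral_add, integral_const_mul, integral_sub, integral_sub]
  · simp
    field_simp
    ring
  all_goals exact Continuous.intervalIntegrable (by fun_prop) _ _

lemma integral_hatPiece_mul_biorthPiece (p q : ℝ) :
    ∫ t in p..q, hatPiece p q t * biorthPiece p q t = (q - p) / 2 := by
  rcases eq_or_ne p q with rfl | hpq
  · simp
  have : q - p ≠ 0 := sub_ne_zero.mpr hpq.symm
  have hpoly : ∀ t, hatPiece p q t * biorthPiece p q t =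
      (3 * t ^ 2 - (5 * p + q) * t + (2 * p ^ 2 + p * q)) / (q - p) ^ 2 := by
    intro t
    simp only [hatPiece, biorthPiece]
    field_simp
    ring
  simp only [hpoly, intervalIntegral.integral_div]
  rw [integral_add, integral_sub, integral_const_mul, integral_const_mul]
  · simp
    field_simp
    ring
  all_goals exact Continuous.intervalIntegrable (by fun_prop) _ _

theorem integral_eq_add_of_eqOn_Ioo {F G₁ G₂ : ℝ → ℝ} {a p m q b : ℝ}
    (hap : a ≤ p) (hpm : p ≤ m) (hmq : m ≤ q) (hqb : q ≤ b)
    (hG₁ : Continuous G₁) (hG₂ : Continuous G₂) (h₀ : ∀ t ∉ Icc p q, F t = 0)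
    (h₁ : EqOn F G₁ (Ioo p m)) (h₂ : EqOn F G₂ (Ioo m q)) :
    ∫ t in a..b, F t = (∫ t in p..m, G₁ t) + ∫ t in m..q, G₂ t := by
  have piece : ∀ {r s : ℝ} {G : ℝ → ℝ}, r ≤ s → Continuous G → EqOn F G (Ioo r s) →
      IntervalIntegrable F MeasureTheory.volume r s ∧ ∫ t in r..s, F t = ∫ t in r..s, G t := by
    intro r s G hrs hG h
    rw [← uIoo_of_le hrs] at h
    exact ⟨(intervalIntegrable_congr_uIoo h).mpr (hG.intervalIntegrable r s),
      integral_congr_uIoo h⟩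
  obtain ⟨i₀, e₀⟩ := piece hap continuous_const fun t ht => h₀ t fun h => ht.2.not_ge h.1
  obtain ⟨i₁, e₁⟩ := piece hpm hG₁ h₁
  obtain ⟨i₂, e₂⟩ := piece hmq hG₂ h₂
  obtain ⟨i₃, e₃⟩ := piece hqb continuous_const fun t ht => h₀ t fun h => ht.1.not_ge h.2
  rw [← integral_add_adjacent_intervals i₀ ((i₁.trans i₂).trans i₃),
    ← integral_add_adjacent_intervals (i₁.trans i₂) i₃, ← integral_add_adjacent_intervals i₁ i₂,
    e₀, e₁, e₂, e₃]
  simp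

lemma slope_cubic {p q : ℝ} (hpq : p ≠ q) (a b c d : ℝ) :
    slope (fun t => a * t ^ 3 + b * t ^ 2 + c * t + d) p q =
      a * (p ^ 2 + p * q + q ^ 2) + b * (p + q) + c := by
  rw [slope_def_field, div_eq_iff (sub_ne_zero.mpr hpq.symm)]
  ring

/-! With `i - 1` truncated at `0` and the right end `min (i + 1) n`, the cells
`[x (i - 1), x i]` and `[x i, x (min (i + 1) n)]` around `x i` are the two cells meeting the
support of `λ_i`, one of them degenerate at the end nodes. -/

section
variable {x : ℕ → ℝ} {n i : ℕ} {t : ℝ}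

lemma pos_of_mem_Ioo_sub_one (ht : t ∈ Ioo (x (i - 1)) (x i)) : 0 < i :=
  Nat.pos_of_ne_zero (by rintro rfl; exact lt_asymm ht.1 ht.2)

lemma lt_of_mem_Ioo_min_succ (hi : i ≤ n) (ht : t ∈ Ioo (x i) (x (min (i + 1) n))) :
    i < n ∧ min (i + 1) n = i + 1 := by
  rcases hi.eq_or_lt with rfl | hi
  · simp at ht
  · exact ⟨hi, min_eq_left hi⟩

lemma biorthFn_of_mem_Ioo_left (ht : t ∈ Ioo (x (i - 1)) (x i)) :
    biorthFn x n i t = biorthPiece (x (i - 1)) (x i) t :=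
  if_pos ⟨pos_of_mem_Ioo_sub_one ht, ht.1.le, ht.2⟩

lemma hatFn_of_mem_Ioo_left (ht : t ∈ Ioo (x (i - 1)) (x i)) :
    hatFn x n i t = hatPiece (x (i - 1)) (x i) t :=
  if_pos ⟨pos_of_mem_Ioo_sub_one ht, ht.1.le, ht.2.le⟩

lemma biorthFn_of_mem_Ioo_right (hi : i ≤ n) (ht : t ∈ Ioo (x i) (x (min (i + 1) n))) :
    biorthFn x n i t = biorthPiece (x (min (i + 1) n)) (x i) t := by
  obtain ⟨hi, hmin⟩ := lt_of_mem_Ioo_min_succ hi ht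
  rw [hmin] at ht ⊢
  exact (if_neg fun h => h.2.2.not_gt ht.1).trans (if_pos ⟨hi, ht.1.le, ht.2⟩)

lemma hatFn_of_mem_Ioo_right (hi : i ≤ n) (ht : t ∈ Ioo (x i) (x (min (i + 1) n))) :
    hatFn x n i t = hatPiece (x (min (i + 1) n)) (x i) t := by
  obtain ⟨hi, hmin⟩ := lt_of_mem_Ioo_min_succ hi ht
  rw [hmin] at ht ⊢
  rw [hatFn, if_neg fun h => h.2.2.not_gt ht.1, if_pos ⟨hi, ht.1.le, ht.2.le⟩, hatPiece,
    ← neg_div_neg_eq, neg_sub, neg_sub]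

lemma biorthFn_eq_zero_of_notMem (hx : StrictMonoOn x (Iic n)) (hi : i ≤ n)
    (ht : t ∉ Icc (x (i - 1)) (x (min (i + 1) n))) : biorthFn x n i t = 0 := by
  have hL : x (i - 1) ≤ x i := hx.monotoneOn (by simp; omega) (by simpa using hi) (by omega)
  have hR : x i ≤ x (min (i + 1) n) := hx.monotoneOn (by simpa using hi) (by simp) (by omega)
  rw [biorthFn, if_neg, if_neg]
  · rintro ⟨hi, h₁, h₂⟩
    rw [min_eq_left hi] at ht
    exact ht ⟨hL.trans h₁, h₂.le⟩
  · rintro ⟨-, h₁, h₂⟩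
    exact ht ⟨h₁, h₂.le.trans hR⟩

lemma interpDeriv_of_mem_Ioo (hx : StrictMonoOn x (Iic n)) (u : ℝ → ℝ) {j : ℕ} (hj : j < n)
    (ht : t ∈ Ioo (x j) (x (j + 1))) : interpDeriv x n u t = slope u (x j) (x (j + 1)) := by
  rw [interpDeriv, Finset.sum_eq_single_of_mem j (Finset.mem_range.mpr hj), if_pos ⟨ht.1, ht.2⟩,
    slope_def_field]
  intro k hk hkj
  refine if_neg fun hk' => ?_
  have hk : k + 1 ≤ n := Finset.mem_range.mp hk
  rcases hkj.lt_or_gt with h | h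
  · have := hx.monotoneOn (by simpa using hk) (by simpa using hj.le) (show k + 1 ≤ j by omega)
    linarith [ht.1, hk'.2]
  · have := hx.monotoneOn (by simpa using hj) (by simpa using hk.trans' (by omega))
      (show j + 1 ≤ k by omega)
    linarith [ht.2, hk'.1]

lemma interpDeriv_of_mem_Ioo_left (hx : StrictMonoOn x (Iic n)) (u : ℝ → ℝ) (hi : i ≤ n)
    (ht : t ∈ Ioo (x (i - 1)) (x i)) : interpDeriv x n u t = slope u (x (i - 1)) (x i) := by
  obtain ⟨j, rfl⟩ : ∃ j, i = j + 1 := ⟨i - 1, by have := pos_of_mem_Ioo_sub_one ht; omega⟩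
  simp only [Nat.add_sub_cancel] at ht ⊢
  exact interpDeriv_of_mem_Ioo hx u hi ht

lemma interpDeriv_of_mem_Ioo_right (hx : StrictMonoOn x (Iic n)) (u : ℝ → ℝ) (hi : i ≤ n)
    (ht : t ∈ Ioo (x i) (x (min (i + 1) n))) :
    interpDeriv x n u t = slope u (x i) (x (min (i + 1) n)) := by
  obtain ⟨hi, hmin⟩ := lt_of_mem_Ioo_min_succ hi ht
  rw [hmin] at ht ⊢
  exact interpDeriv_of_mem_Ioo hx u hi ht

theorem recGrad_eq_slope (hx : StrictMonoOn x (Iic n)) (hi : i ≤ n) (u : ℝ → ℝ) :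
    recGrad x n u i = slope u (x (i - 1)) (x (min (i + 1) n)) := by
  set p := x (i - 1)
  set q := x (min (i + 1) n)
  have h0p : x 0 ≤ p := hx.monotoneOn (by simp) (by simp; omega) (by omega)
  have hpi : p ≤ x i := hx.monotoneOn (by simp; omega) (by simpa using hi) (by omega)
  have hiq : x i ≤ q := hx.monotoneOn (by simpa using hi) (by simp) (by omega)
  have hqn : q ≤ x n := hx.monotoneOn (by simp) (by simp) (by omega)
  have hnum : ∫ t in x 0..x n, interpDeriv x n u t * biorthFn x n i t = (u q - u p) / 2 := by
    rw [integral_eq_add_of_eqOn_Ioo h0p hpi hiq hqn (continuous_const_mul_biorthPiece _ p (x i))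
      (continuous_const_mul_biorthPiece _ q (x i))
      (fun t ht => by rw [biorthFn_eq_zero_of_notMem hx hi ht, mul_zero])
      (fun t ht => by rw [interpDeriv_of_mem_Ioo_left hx u hi ht, biorthFn_of_mem_Ioo_left ht])
      (fun t ht => by
        rw [interpDeriv_of_mem_Ioo_right hx u hi ht, biorthFn_of_mem_Ioo_right hi ht]),
      integral_const_mul, integral_const_mul, integral_symm q (x i), integral_biorthPiece,
      integral_biorthPiece]
    have hl := sub_smul_slope u p (x i)
    have hr := sub_smul_slope u (x i) q
    simp only [smul_eq_mul, vsub_eq_sub] at hl hr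
    linear_combination (hl + hr) / 2
  have hden : ∫ t in x 0..x n, hatFn x n i t * biorthFn x n i t = (q - p) / 2 := by
    rw [integral_eq_add_of_eqOn_Ioo h0p hpi hiq hqn (continuous_hatPiece_mul_biorthPiece p (x i))
      (continuous_hatPiece_mul_biorthPiece q (x i))
      (fun t ht => by rw [biorthFn_eq_zero_of_notMem hx hi ht, mul_zero])
      (fun t ht => by rw [hatFn_of_mem_Ioo_left ht, biorthFn_of_mem_Ioo_left ht])
      (fun t ht => by rw [hatFn_of_mem_Ioo_right hi ht, biorthFn_of_mem_Ioo_right hi ht]),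
      integral_symm q (x i), integral_hatPiece_mul_biorthPiece, integral_hatPiece_mul_biorthPiece]
    ring
  rw [recGrad, hnum, hden, slope_def_field, div_div_div_cancel_right₀ two_ne_zero]

end

/-- nodal error for cubics: for `u(x) = a x³ + b x² + c x + d`
(so `u'(t) = 3 a t² + 2 b t + c`), for every interior index `1 ≤ i ≤ n-1`
`g_i - u'(x_i) = a (x_{i-1}² + x_{i-1} x_{i+1} + x_{i+1}² - 3 x_i²) + b (x_{i-1} + x_{i+1} - 2 x_i)`,
and `g_0 - u'(x_0) = a (x_1² + x_0 x_1 - 2 x_0²) + b (x_1 - x_0)`,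
`g_n - u'(x_n) = a (x_{n-1}² + x_{n-1} x_n - 2 x_n²) + b (x_{n-1} - x_n)`. -/
theorem recGrad_cubic_nodal_error (n : ℕ) (x : ℕ → ℝ) (hn : 2 ≤ n)
    (hx : ∀ i < n, x i < x (i+1)) (a b c d : ℝ) :
    (∀ i : ℕ, 1 ≤ i → i < n →
      recGrad x n (fun t => a * t^3 + b * t^2 + c * t + d) i
          - (3 * a * (x i)^2 + 2 * b * x i + c)
        = a * ((x (i-1))^2 + x (i-1) * x (i+1) + (x (i+1))^2 - 3 * (x i)^2)
          + b * (x (i-1) + x (i+1) - 2 * x i)) ∧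
    recGrad x n (fun t => a * t^3 + b * t^2 + c * t + d) 0
        - (3 * a * (x 0)^2 + 2 * b * x 0 + c)
      = a * ((x 1)^2 + x 0 * x 1 - 2 * (x 0)^2) + b * (x 1 - x 0) ∧
    recGrad x n (fun t => a * t^3 + b * t^2 + c * t + d) n
        - (3 * a * (x n)^2 + 2 * b * x n + c)
      = a * ((x (n-1))^2 + x (n-1) * x n - 2 * (x n)^2) + b * (x (n-1) - x n) := by
  have hmono : StrictMonoOn x (Iic n) := strictMonoOn_Iic_of_lt_succ hx
  have hne : ∀ {j k : ℕ}, j < k → k ≤ n → x j ≠ x k := fun hjk hk =>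
    (hmono (by simp; omega) (by simpa using hk) hjk).ne
  refine ⟨fun i hi₁ hi₂ => ?_, ?_, ?_⟩
  · rw [recGrad_eq_slope hmono hi₂.le, min_eq_left hi₂, slope_cubic (hne (by omega) hi₂)]
    ring
  · rw [recGrad_eq_slope hmono (Nat.zero_le n), min_eq_left (by omega), Nat.zero_sub, zero_add,
      slope_cubic (hne zero_lt_one (by omega))]
    ring
  · rw [recGrad_eq_slope hmono le_rfl, min_eq_right (Nat.le_succ n),
      slope_cubic (hne (Nat.sub_lt (by omega) one_pos) le_rfl)]
    ring
end
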